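/- For every integer n ≥ 3, Left wins the Classic Variant of the Mixed Deletion Game on the complete graph K_n regardless of which player moves first. -/

import Mathlib

/-! Combinatorial game theory (`SetTheory.PGame`) has been removed from Mathlib;
the needed part is reproduced here with its old (Mathlib, Dec 2024) meaning. -/

universe u

namespace SetTheory

/-- Pre-games, as in the old Mathlib. -/
inductive PGame : Type (u + 1)
  | mk : ∀ α β : Type u, (α → PGame) → (β → PGame) → PGame

namespace PGame

/-- Inner recursion for `leLF`. -/
def leLFAux (xl xr : Type u) (fL : xl → PGame.{u} → Prop × Prop)
    (fR : xr → PGame.{u} → Prop × Prop) (x : PGame.{u}) : PGame.{u} → Prop × Prop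
  | mk yl yr yL yR =>
    ((∀ i, (fL i (mk yl yr yL yR)).2) ∧ ∀ j, (leLFAux xl xr fL fR x (yR j)).2,
      (∃ i, (leLFAux xl xr fL fR x (yL i)).1) ∨ ∃ j, (fR j (mk yl yr yL yR)).1)

/-- Simultaneous definition of `≤` and `⧏` on pre-games. -/
def leLF : PGame.{u} → PGame.{u} → Prop × Prop
  | mk xl xr xL xR =>
    leLFAux xl xr (fun i => leLF (xL i)) (fun j => leLF (xR j)) (mk xl xr xL xR)

instance : LE PGame.{u} := ⟨fun x y => (leLF x y).1⟩

/-- The less or fuzzy relation: `x ⧏ y` iff `¬ y ≤ x`. -/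
def LF (x y : PGame.{u}) : Prop := ¬y ≤ x

infixl:50 " ⧏ " => PGame.LF

instance : LT PGame.{u} := ⟨fun x y => x ≤ y ∧ x ⧏ y⟩

instance : Zero PGame.{u} := ⟨⟨PEmpty, PEmpty, PEmpty.elim, PEmpty.elim⟩⟩

instance : One PGame.{u} := ⟨⟨PUnit, PEmpty, fun _ => 0, PEmpty.elim⟩⟩

/-- Negation of pre-games. -/
def neg : PGame.{u} → PGame.{u}
  | ⟨l, r, L, R⟩ => ⟨r, l, fun i => neg (R i), fun i => neg (L i)⟩

instance : Neg PGame.{u} := ⟨neg⟩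

/-- Inner recursion for `add`. -/
def addAux (xl xr : Type u) (fL : xl → PGame.{u} → PGame.{u}) (fR : xr → PGame.{u} → PGame.{u})
    (x : PGame.{u}) : PGame.{u} → PGame.{u}
  | mk yl yr yL yR =>
    mk (xl ⊕ yl) (xr ⊕ yr)
      (Sum.elim (fun i => fL i (mk yl yr yL yR)) (fun i => addAux xl xr fL fR x (yL i)))
      (Sum.elim (fun i => fR i (mk yl yr yL yR)) (fun i => addAux xl xr fL fR x (yR i)))

/-- Sum of pre-games. -/
def add : PGame.{u} → PGame.{u} → PGame.{u}
  | mk xl xr xL xR =>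
    addAux xl xr (fun i => add (xL i)) (fun j => add (xR j)) (mk xl xr xL xR)

instance : Add PGame.{u} := ⟨add⟩

/-- The pre-game `star = {0 | 0}`. -/
def star : PGame.{u} := ⟨PUnit, PUnit, fun _ => 0, fun _ => 0⟩

/-- The nim pre-game of an ordinal. -/
noncomputable def nim (o : Ordinal.{u}) : PGame.{u} :=
  ⟨o.ToType, o.ToType,
    fun x => nim ((Ordinal.ToType.mk (o := o)).symm x).val,
    fun x => nim ((Ordinal.ToType.mk (o := o)).symm x).val⟩
termination_by o
decreasing_by all_goals exact ((Ordinal.ToType.mk (o := o)).symm x).prop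

end PGame

end SetTheory

open SetTheory PGame

namespace MixedDeletion

/-- The degree of a vertex `v` with respect to an edge set `E`. -/
def deg (E : Finset (Sym2 ℕ)) (v : ℕ) : ℕ := (E.filter (fun e => v ∈ e)).card

/-- The graph position with vertex set `V` and edge set `E` has no isolated vertex. -/
def NoIsol (V : Finset ℕ) (E : Finset (Sym2 ℕ)) : Prop := ∀ v ∈ V, 0 < deg E v

/-- Result of Left deleting the vertex `v`: remove `v` and all incident edges. -/
def delV (V : Finset ℕ) (E : Finset (Sym2 ℕ)) (v : ℕ) : Finset ℕ × Finset (Sym2 ℕ) :=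
  (V.erase v, E.filter (fun e => v ∉ e))

/-- Left may legally delete vertex `v` under the base (Classic) rules:
`v` is a vertex and the deletion creates no isolated vertex. -/
def LeftOK (V : Finset ℕ) (E : Finset (Sym2 ℕ)) (v : ℕ) : Prop :=
  v ∈ V ∧ NoIsol (V.erase v) (E.filter (fun e => v ∉ e))

/-- Right may legally delete edge `e` under the base (Classic) rules:
`e` is an edge and the deletion creates no isolated vertex. -/
def RightOK (V : Finset ℕ) (E : Finset (Sym2 ℕ)) (e : Sym2 ℕ) : Prop :=
  e ∈ E ∧ NoIsol V (E.erase e)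

/-- The Classic Variant of the Mixed Deletion Game, as a partizan game:
Left deletes a vertex (and incident edges), Right deletes an edge,
and no move may create an isolated vertex. -/
def classicG : Finset ℕ → Finset (Sym2 ℕ) → PGame
  | V, E =>
    PGame.mk {v : ℕ // LeftOK V E v} {e : Sym2 ℕ // RightOK V E e}
      (fun x => classicG (V.erase x.val) (E.filter (fun e => x.val ∉ e)))
      (fun x => classicG V (E.erase x.val))
  termination_by V E => V.card + E.card
  decreasing_by
  · have h1 : (V.erase x.val).card < V.card := Finset.card_erase_lt_of_mem x.2.1
    have h2 : (E.filter (fun e => x.val ∉ e)).card ≤ E.card := Finset.card_filter_le _ _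
    omega
  · have h1 : (E.erase x.val).card < E.card := Finset.card_erase_lt_of_mem x.2.1
    omega

/-- The Forbidden Leaf Variant: as the Classic Variant, but Left may not
delete leaf vertices (vertices of degree one). -/
def flG : Finset ℕ → Finset (Sym2 ℕ) → PGame
  | V, E =>
    PGame.mk {v : ℕ // LeftOK V E v ∧ deg E v ≠ 1} {e : Sym2 ℕ // RightOK V E e}
      (fun x => flG (V.erase x.val) (E.filter (fun e => x.val ∉ e)))
      (fun x => flG V (E.erase x.val))
  termination_by V E => V.card + E.card
  decreasing_by
  · have h1 : (V.erase x.val).card < V.card := Finset.card_erase_lt_of_mem x.2.1.1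
    have h2 : (E.filter (fun e => x.val ∉ e)).card ≤ E.card := Finset.card_filter_le _ _
    omega
  · have h1 : (E.erase x.val).card < E.card := Finset.card_erase_lt_of_mem x.2.1
    omega

/-- The Mutual Failures Variant: as the Classic Variant, but in any graph
position a player has a legal move if and only if the opponent does; i.e. a
base-rules move is legal only if the opponent also has a base-rules move. -/
def mfG : Finset ℕ → Finset (Sym2 ℕ) → PGame
  | V, E =>
    PGame.mk {v : ℕ // LeftOK V E v ∧ ∃ e, RightOK V E e}
      {e : Sym2 ℕ // RightOK V E e ∧ ∃ v, LeftOK V E v}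
      (fun x => mfG (V.erase x.val) (E.filter (fun e => x.val ∉ e)))
      (fun x => mfG V (E.erase x.val))
  termination_by V E => V.card + E.card
  decreasing_by
  · have h1 : (V.erase x.val).card < V.card := Finset.card_erase_lt_of_mem x.2.1.1
    have h2 : (E.filter (fun e => x.val ∉ e)).card ≤ E.card := Finset.card_filter_le _ _
    omega
  · have h1 : (E.erase x.val).card < E.card := Finset.card_erase_lt_of_mem x.2.1.1
    omega

/-- Edge set of the path graph on vertices `0, 1, …, n-1`. -/
def pathE (n : ℕ) : Finset (Sym2 ℕ) := (Finset.range (n - 1)).image (fun i => s(i, i + 1))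

/-- Edge set of the cycle graph on vertices `0, 1, …, n-1`. -/
def cycleE (n : ℕ) : Finset (Sym2 ℕ) := (Finset.range n).image (fun i => s(i, (i + 1) % n))

/-- Edge set of the complete graph on vertices `0, 1, …, n-1`. -/
def completeE (n : ℕ) : Finset (Sym2 ℕ) := (Finset.range n).sym2.filter (fun e => ¬ e.IsDiag)

/-- The path position `P_n` in the Classic Variant. -/
def classicPath (n : ℕ) : PGame := classicG (Finset.range n) (pathE n)

/-- The cycle position `C_n` in the Classic Variant. -/
def classicCycle (n : ℕ) : PGame := classicG (Finset.range n) (cycleE n)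

/-- The complete graph position `K_n` in the Classic Variant. -/
def classicComplete (n : ℕ) : PGame := classicG (Finset.range n) (completeE n)

/-- The path position `P_n` in the Forbidden Leaf Variant. -/
def flPath (n : ℕ) : PGame := flG (Finset.range n) (pathE n)

/-- The cycle position `C_n` in the Forbidden Leaf Variant. -/
def flCycle (n : ℕ) : PGame := flG (Finset.range n) (cycleE n)

/-- The complete graph position `K_n` in the Forbidden Leaf Variant. -/
def flComplete (n : ℕ) : PGame := flG (Finset.range n) (completeE n)

/-- The path position `P_n` in the Mutual Failures Variant. -/
def mfPath (n : ℕ) : PGame := mfG (Finset.range n) (pathE n)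

/-- The cycle position `C_n` in the Mutual Failures Variant. -/
def mfCycle (n : ℕ) : PGame := mfG (Finset.range n) (cycleE n)

/-- The complete graph position `K_n` in the Mutual Failures Variant. -/
def mfComplete (n : ℕ) : PGame := mfG (Finset.range n) (completeE n)

/-- The partizan game equal to a natural number `n`. -/
def natPG : ℕ → PGame
  | 0 => 0
  | n + 1 => natPG n + 1

/-- The partizan game equal to an integer `z`. -/
def intPG (z : ℤ) : PGame := if 0 ≤ z then natPG z.toNat else -natPG (-z).toNat

/-- The game up, `↑ = {0 | *}`. -/
def up : PGame := PGame.mk PUnit PUnit (fun _ => 0) (fun _ => star)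

/-- The game down, `↓ = {* | 0}`. -/
def down : PGame := -up

/-- The sum of `n` copies of up. -/
def natUp : ℕ → PGame
  | 0 => 0
  | n + 1 => natUp n + up

/-- The game `z·↑`: `|z|` copies of up if `z ≥ 0`, and `|z|` copies of down otherwise. -/
def zUp (z : ℤ) : PGame := if 0 ≤ z then natUp z.toNat else -natUp (-z).toNat

/-- Two games have the same outcome: Left wins moving first in one iff in the other,
and Right wins moving first in one iff in the other. -/
def SameOutcome (A B : PGame) : Prop := (0 ⧏ A ↔ 0 ⧏ B) ∧ (A ⧏ 0 ↔ B ⧏ 0)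

/-- Far-star equivalence: `G + X + ✶` and `H + X + ✶` have the same outcome for
every game `X`, where `✶` (far star) is any nim-heap `*k` with `k ≥ 2`. -/
def FarStarEquiv (G H : PGame) : Prop :=
  ∀ (X : PGame) (k : ℕ), 2 ≤ k → SameOutcome (G + X + nim k) (H + X + nim k)

/-- `G` has atomic weight `z` if `G` is far-star equivalent to `z·↑`. -/
def AtomicWeight (G : PGame) (z : ℤ) : Prop := FarStarEquiv G (zUp z)

/-- A game is all-small if in every subposition Left has a move iff Right has a move. -/
def AllSmall : PGame → Prop
  | PGame.mk l r L R =>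
    (Nonempty l ↔ Nonempty r) ∧ (∀ i, AllSmall (L i)) ∧ (∀ j, AllSmall (R j))

end MixedDeletion

namespace SetTheory.PGame

theorem leLF_mk (xl xr : Type u) (xL : xl → PGame.{u}) (xR : xr → PGame.{u})
    (yl yr : Type u) (yL : yl → PGame.{u}) (yR : yr → PGame.{u}) :
    leLF (mk xl xr xL xR) (mk yl yr yL yR) =
      ((∀ i, (leLF (xL i) (mk yl yr yL yR)).2) ∧ ∀ j, (leLF (mk xl xr xL xR) (yR j)).2,
        (∃ i, (leLF (mk xl xr xL xR) (yL i)).1) ∨ ∃ j, (leLF (xR j) (mk yl yr yL yR)).1) :=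
  rfl

theorem zero_eq_mk : (0 : PGame.{u}) = mk PEmpty PEmpty PEmpty.elim PEmpty.elim :=
  rfl

theorem leLF_snd_iff (x y : PGame.{u}) :
    ((leLF x y).2 ↔ ¬(leLF y x).1) ∧ ((leLF y x).2 ↔ ¬(leLF x y).1) := by
  induction x generalizing y with
  | mk xl xr xL xR ihl ihr =>
    induction y with
    | mk yl yr yL yR jhl jhr =>
      rw [leLF_mk, leLF_mk]
      simp only [not_and_or, not_forall]
      constructor
      · refine or_congr (exists_congr fun i => ?_) (exists_congr fun j => ?_)
        · rw [(jhl i).2, not_not]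
        · rw [(ihr j _).2, not_not]
      · refine or_congr (exists_congr fun i => ?_) (exists_congr fun j => ?_)
        · rw [(ihl i _).1, not_not]
        · rw [(jhr j).1, not_not]

theorem zero_le_mk_iff {xl xr : Type u} {xL : xl → PGame.{u}} {xR : xr → PGame.{u}} :
    0 ≤ mk xl xr xL xR ↔ ∀ j, 0 ⧏ xR j := by
  show (leLF 0 (mk xl xr xL xR)).1 ↔ ∀ j, ¬(leLF (xR j) 0).1
  rw [zero_eq_mk, leLF_mk]
  simp only [IsEmpty.forall_iff, true_and]
  exact forall_congr' fun j => (leLF_snd_iff _ _).1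

theorem zero_lf_mk_iff {xl xr : Type u} {xL : xl → PGame.{u}} {xR : xr → PGame.{u}} :
    0 ⧏ mk xl xr xL xR ↔ ∃ i, 0 ≤ xL i := by
  show ¬(leLF (mk xl xr xL xR) 0).1 ↔ ∃ i, (leLF 0 (xL i)).1
  rw [zero_eq_mk,
    ← (leLF_snd_iff _ _).1, leLF_mk]
  simp only [IsEmpty.exists_iff, or_false]

end SetTheory.PGame

namespace MixedDeletion

theorem zero_le_classicG_iff {V : Finset ℕ} {E : Finset (Sym2 ℕ)} :
    0 ≤ classicG V E ↔ ∀ e, RightOK V E e → 0 ⧏ classicG V (E.erase e) := by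
  rw [classicG, zero_le_mk_iff, Subtype.forall]

theorem zero_lf_classicG_iff {V : Finset ℕ} {E : Finset (Sym2 ℕ)} :
    0 ⧏ classicG V E ↔ ∃ v, LeftOK V E v ∧ 0 ≤ classicG (V.erase v) (E.filter (v ∉ ·)) := by
  rw [classicG, zero_lf_mk_iff]
  simp only [Subtype.exists, exists_prop]

def completeEdgesOn (V : Finset ℕ) : Finset (Sym2 ℕ) := V.sym2.filter (fun e => ¬ e.IsDiag)

theorem completeE_eq_completeEdgesOn (n : ℕ) : completeE n = completeEdgesOn (Finset.range n) :=
  rfl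

theorem mk_mem_completeEdgesOn {V : Finset ℕ} {a b : ℕ} :
    s(a, b) ∈ completeEdgesOn V ↔ a ∈ V ∧ b ∈ V ∧ a ≠ b := by
  simp [completeEdgesOn, and_assoc]

theorem filter_notMem_completeEdgesOn (V : Finset ℕ) (a : ℕ) :
    (completeEdgesOn V).filter (a ∉ ·) = completeEdgesOn (V.erase a) := by
  ext e
  induction e using Sym2.inductionOn with
  | _ x y =>
    simp only [Finset.mem_filter, mk_mem_completeEdgesOn, Finset.mem_erase, Sym2.mem_iff]
    tauto

theorem filter_notMem_erase_completeEdgesOn (V : Finset ℕ) {a : ℕ} {e : Sym2 ℕ} (ha : a ∈ e) :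
    ((completeEdgesOn V).erase e).filter (a ∉ ·) = completeEdgesOn (V.erase a) := by
  rw [Finset.filter_erase, Finset.erase_eq_of_notMem (by simp [ha]),
    filter_notMem_completeEdgesOn]

theorem noIsol_completeEdgesOn {V : Finset ℕ} (hV : 1 < V.card) :
    NoIsol V (completeEdgesOn V) := by
  intro v hv
  obtain ⟨w, hw, hwv⟩ := Finset.exists_mem_ne hV v
  exact Finset.card_pos.2 ⟨s(v, w), by simp [mk_mem_completeEdgesOn, hv, hw, hwv.symm]⟩

theorem one_lt_card_erase_of_rightOK {V : Finset ℕ} {a b : ℕ}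
    (h : RightOK V (completeEdgesOn V) s(a, b)) : 1 < (V.erase a).card := by
  obtain ⟨hab, hnoIsol⟩ := h
  obtain ⟨ha, hb, hne⟩ := mk_mem_completeEdgesOn.1 hab
  obtain ⟨e, he⟩ := Finset.card_pos.1 (hnoIsol a ha)
  obtain ⟨⟨heab, heV⟩, hae⟩ := by simpa only [Finset.mem_filter, Finset.mem_erase] using he
  obtain ⟨c, rfl⟩ := Sym2.mem_iff_exists.1 hae
  obtain ⟨-, hc, hac⟩ := mk_mem_completeEdgesOn.1 heV
  have hcb : c ≠ b := by rintro rfl; exact heab rfl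
  exact Finset.one_lt_card.2 ⟨b, Finset.mem_erase.2 ⟨hne.symm, hb⟩,
    c, Finset.mem_erase.2 ⟨hac.symm, hc⟩, hcb.symm⟩

/-- Left answers Right's deletion of an edge by deleting one of its endpoints, which leaves a
smaller complete graph. -/
theorem zero_le_classicG_completeEdgesOn (V : Finset ℕ) : 0 ≤ classicG V (completeEdgesOn V) := by
  induction V using Finset.strongInduction with
  | _ V ih =>
    rw [zero_le_classicG_iff]
    intro e he
    induction e using Sym2.inductionOn with
    | _ a b =>
      have ha : a ∈ V := (mk_mem_completeEdgesOn.1 he.1).1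
      have hdel := filter_notMem_erase_completeEdgesOn V (Sym2.mem_mk_left a b)
      refine zero_lf_classicG_iff.2 ⟨a, ⟨ha, ?_⟩, ?_⟩ <;> rw [hdel]
      · exact noIsol_completeEdgesOn (one_lt_card_erase_of_rightOK he)
      · exact ih _ (Finset.erase_ssubset ha)

/-- For every `n ≥ 3`, Left wins the Classic Variant on the complete graph `K_n`
regardless of which player moves first. -/
theorem classic_complete_left_wins : ∀ n : ℕ, 3 ≤ n → 0 < classicComplete n := by
  intro n hn
  rw [classicComplete, completeE_eq_completeEdgesOn]
  have h0 : 0 ∈ Finset.range n := Finset.mem_range.2 (by omega)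
  have hcard : 1 < ((Finset.range n).erase 0).card := by
    rw [Finset.card_erase_of_mem h0, Finset.card_range]; omega
  have hdel := filter_notMem_completeEdgesOn (Finset.range n) 0
  refine ⟨zero_le_classicG_completeEdgesOn _,
    zero_lf_classicG_iff.2 ⟨0, ⟨h0, ?_⟩, ?_⟩⟩ <;> rw [hdel]
  · exact noIsol_completeEdgesOn hcard
  · exact zero_le_classicG_completeEdgesOn _

end MixedDeletion
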